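/- arXiv:1505.05707 — 2 statements merged into one kernel-verified Lean document; each statement's English description precedes it below -/
import Mathlib

section
/- Let f: [0,∞) → ℝ be locally Lipschitz, L > 0, and let F(u) = ∫₀ᵘ f(s) ds. If there exists a C² function φ: [0,∞) → ℝ satisfying φ'' + f(φ) = 0, φ(0) = 0, φ'(0) = 1, and φ(y) → L as y → ∞, then f(L) = 0 and F(L) = 1/2. -/
/-!
The Hamiltonian `H = (φ')² / 2 + F(φ)` is conserved along the solution, so `H ≡ 1/2` and
`(φ')² → 1 - 2 F(L)`. A function with a finite limit cannot have a derivative tending to a nonzero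
limit (mean value theorem on `[y, y + 1]`); if `(φ')²` tended to a positive limit, `φ'` would
eventually keep one sign and tend to `±√(1 - 2 F(L)) ≠ 0`. Hence `φ' → 0`, giving `F(L) = 1/2`,
and then `φ'' = -f(φ) → -f(L)` forces `f(L) = 0` by the same principle.
-/

open Real Filter intervalIntegral Set Topology

theorem eq_zero_of_tendsto_of_tendsto_deriv {g : ℝ → ℝ} {a b : ℝ} (hd : Differentiable ℝ g)
    (hg : Tendsto g atTop (𝓝 a)) (hg' : Tendsto (deriv g) atTop (𝓝 b)) : b = 0 := by
  have hmvt : ∀ y, ∃ ξ ∈ Ioo y (y + 1), deriv g ξ = g (y + 1) - g y := fun y => by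
    simpa using exists_deriv_eq_slope g (lt_add_one y) hd.continuous.continuousOn
      hd.differentiableOn
  choose ξ hξ hξeq using hmvt
  have hξ_top : Tendsto ξ atTop atTop := tendsto_atTop_mono (fun y => (hξ y).1.le) tendsto_id
  have hdiff : Tendsto (fun y => g (y + 1) - g y) atTop (𝓝 (a - a)) :=
    (hg.comp (tendsto_atTop_add_const_right _ 1 tendsto_id)).sub hg
  rw [sub_self] at hdiff
  exact tendsto_nhds_unique (hg'.comp hξ_top) (hdiff.congr fun y => (hξeq y).symm)

theorem tendsto_or_tendsto_neg_of_tendsto_abs {g : ℝ → ℝ} {r : ℝ} (hc : Continuous g)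
    (h : Tendsto (fun x => |g x|) atTop (𝓝 r)) (hr : 0 < r) :
    Tendsto g atTop (𝓝 r) ∨ Tendsto g atTop (𝓝 (-r)) := by
  obtain ⟨N, hN⟩ := eventually_atTop.mp (h.eventually (lt_mem_nhds hr))
  have hsign : EqOn g (fun x => |g x|) (Ici N) ∨ EqOn g (-fun x => |g x|) (Ici N) :=
    isPreconnected_Ici.eq_or_eq_neg_of_sq_eq hc.continuousOn hc.abs.continuousOn
      (fun x _ => by simp only [Pi.pow_apply, sq_abs]) (fun hx => (hN _ hx).ne')
  refine hsign.imp (fun hpos => h.congr' ?_) (fun hneg => h.neg.congr' ?_) <;>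
    filter_upwards [eventually_ge_atTop N] with x hx
  · exact (hpos hx).symm
  · exact (hneg hx).symm

theorem tendsto_deriv_zero_of_tendsto_of_tendsto_sq_deriv {g : ℝ → ℝ} {a c : ℝ}
    (hd : Differentiable ℝ g) (hc : Continuous (deriv g)) (hg : Tendsto g atTop (𝓝 a))
    (h : Tendsto (fun x => deriv g x ^ 2) atTop (𝓝 c)) : Tendsto (deriv g) atTop (𝓝 0) := by
  have habs : Tendsto (fun x => |deriv g x|) atTop (𝓝 (√c)) := by
    simpa only [Function.comp_def, sqrt_sq_eq_abs] using (continuous_sqrt.tendsto c).comp h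
  suffices hc0 : √c = 0 by
    rw [hc0] at habs
    exact (tendsto_zero_iff_abs_tendsto_zero _).mpr habs
  by_contra hne
  have hpos_lim : 0 < √c := lt_of_le_of_ne (sqrt_nonneg c) (Ne.symm hne)
  rcases tendsto_or_tendsto_neg_of_tendsto_abs hc habs hpos_lim with hpos | hneg
  · exact hne (eq_zero_of_tendsto_of_tendsto_deriv hd hg hpos)
  · exact hne (neg_eq_zero.mp (eq_zero_of_tendsto_of_tendsto_deriv hd hg hneg))

noncomputable def hamiltonian (F φ : ℝ → ℝ) (y : ℝ) : ℝ :=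
  deriv φ y ^ 2 / 2 + F (φ y)

section Hamiltonian

variable {f F φ : ℝ → ℝ}

theorem hasDerivAt_hamiltonian (hF : ∀ u, HasDerivAt F (f u) u) (hφ : Differentiable ℝ φ)
    (hφ' : Differentiable ℝ (deriv φ)) (y : ℝ) :
    HasDerivAt (hamiltonian F φ) (deriv φ y * (deriv (deriv φ) y + f (φ y))) y := by
  have hkin : HasDerivAt (fun y => deriv φ y ^ 2 / 2) (deriv φ y * deriv (deriv φ) y) y :=
    (((hφ' y).hasDerivAt.pow 2).div_const 2).congr_deriv (by ring)
  have hpot : HasDerivAt (fun y => F (φ y)) (f (φ y) * deriv φ y) y :=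
    (hF (φ y)).comp y (hφ y).hasDerivAt
  exact (hkin.add hpot).congr_deriv (by ring)

theorem hamiltonian_eq_of_ode {a : ℝ} (hF : ∀ u, HasDerivAt F (f u) u)
    (hφ : Differentiable ℝ φ) (hφ' : Differentiable ℝ (deriv φ))
    (hode : ∀ y ∈ Ici a, deriv (deriv φ) y + f (φ y) = 0) :
    ∀ y ∈ Ici a, hamiltonian F φ y = hamiltonian F φ a := by
  have hH := hasDerivAt_hamiltonian hF hφ hφ'
  intro y hy
  refine constant_of_has_deriv_right_zero (fun x _ => (hH x).continuousAt.continuousWithinAt)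
    (fun x hx => ?_) y ⟨hy, le_rfl⟩
  simpa [hode x hx.1] using (hH x).hasDerivWithinAt (s := Ici x)

end Hamiltonian

theorem stmt_0_general (f : ℝ → ℝ) (hf : LocallyLipschitz f) (L : ℝ)
    (F : ℝ → ℝ) (hF : ∀ u, F u = ∫ s in (0:ℝ)..u, f s)
    (φ : ℝ → ℝ) (hφ : ContDiff ℝ 2 φ)
    (hode : ∀ y ∈ Set.Ici (0:ℝ), deriv (deriv φ) y + f (φ y) = 0)
    (h0 : φ 0 = 0) (h0' : deriv φ 0 = 1)
    (hlim : Tendsto φ atTop (nhds L)) :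
    f L = 0 ∧ F L = 1/2 := by
  have hfc : Continuous f := hf.continuous
  have hφd : Differentiable ℝ φ := hφ.differentiable (by norm_num)
  have hφ'd : Differentiable ℝ (deriv φ) := hφ.differentiable_deriv_two
  have hFd : ∀ u, HasDerivAt F (f u) u := fun u =>
    funext hF ▸ (hfc.integral_hasStrictDerivAt 0 u).hasDerivAt
  have hH : ∀ y ∈ Ici (0:ℝ), deriv φ y ^ 2 = 1 - 2 * F (φ y) := fun y hy => by
    have := hamiltonian_eq_of_ode hFd hφd hφ'd hode y hy
    simp only [hamiltonian, h0, h0', hF 0, integral_same] at this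
    linarith
  have hsq : Tendsto (fun y => deriv φ y ^ 2) atTop (𝓝 (1 - 2 * F L)) :=
    (tendsto_const_nhds.sub (((hFd L).continuousAt.tendsto.comp hlim).const_mul 2)).congr'
      (eventually_atTop.mpr ⟨0, fun y hy => (hH y hy).symm⟩)
  have hφ'0 : Tendsto (deriv φ) atTop (𝓝 0) :=
    tendsto_deriv_zero_of_tendsto_of_tendsto_sq_deriv hφd (hφ.continuous_deriv (by norm_num))
      hlim hsq
  have hFL : F L = 1/2 := by
    have := tendsto_nhds_unique hsq (by simpa using hφ'0.pow 2)
    linarith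
  have hφ'' : Tendsto (deriv (deriv φ)) atTop (𝓝 (-f L)) :=
    (hfc.continuousAt.tendsto.comp hlim).neg.congr'
      (eventually_atTop.mpr ⟨0, fun y hy => by simp [eq_neg_of_add_eq_zero_left (hode y hy)]⟩)
  exact ⟨neg_eq_zero.mp (eq_zero_of_tendsto_of_tendsto_deriv hφ'd hφ'0 hφ''), hFL⟩

theorem stmt_0 (f : ℝ → ℝ) (hf : LocallyLipschitz f) (L : ℝ) (hL : 0 < L)
    (F : ℝ → ℝ) (hF : ∀ u, F u = ∫ s in (0:ℝ)..u, f s)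
    (φ : ℝ → ℝ) (hφ : ContDiff ℝ 2 φ)
    (hode : ∀ y ∈ Set.Ici (0:ℝ), deriv (deriv φ) y + f (φ y) = 0)
    (h0 : φ 0 = 0) (h0' : deriv φ 0 = 1)
    (hlim : Tendsto φ atTop (nhds L)) :
    f L = 0 ∧ F L = 1/2 :=
  stmt_0_general f hf L F hF φ hφ hode h0 h0' hlim
end

section
/- Let φ: [0,∞) → ℝ be a C² solution of φ'' + f(φ) = 0 with φ(0) = 0, φ'(0) = 1, and φ(y) → L > 0 as y → ∞, with f locally Lipschitz. Then φ'(y) > 0 for all y ≥ 0 and 0 ≤ φ(y) < L for all y ≥ 0. -/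
open Real Filter MeasureTheory intervalIntegral

/-!
Pass to the phase plane `(φ, φ')`, where the equation is an autonomous system with locally
Lipschitz field, so solutions are unique. Uniqueness makes a solution symmetric about each zero
of `φ'`. If `φ'` vanished, reflecting about that zero would reach the state `(0, -1)`; then `φ`
dips below `0` but must climb back to `L`, so `φ'` vanishes again, and reflecting about that
second zero returns to the initial state `(0, 1)`. The solution would then be periodic, against
`φ → L ≠ 0`. Hence `φ' > 0`, and a strictly increasing `φ` stays in `[φ 0, L)`.
-/

open Set Topology

theorem ODE_solution_unique_of_locallyLipschitz {E : Type*} [NormedAddCommGroup E]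
    [NormedSpace ℝ E] {V : E → E} (hV : LocallyLipschitz V) {u w : ℝ → E} {a b : ℝ}
    (hu : ∀ t ∈ Icc a b, HasDerivAt u (V (u t)) t)
    (hw : ∀ t ∈ Icc a b, HasDerivAt w (V (w t)) t) (ha : u a = w a) :
    EqOn u w (Icc a b) := by
  have huc : ContinuousOn u (Icc a b) := fun t ht => (hu t ht).continuousAt.continuousWithinAt
  have hwc : ContinuousOn w (Icc a b) := fun t ht => (hw t ht).continuousAt.continuousWithinAt
  obtain ⟨K, hK⟩ := hV.locallyLipschitzOn.exists_lipschitzOnWith_of_compact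
    ((isCompact_Icc.image_of_continuousOn huc).union (isCompact_Icc.image_of_continuousOn hwc))
  exact ODE_solution_unique_of_mem_Icc_right (v := fun _ => V) (fun _ _ => hK)
    huc (fun t ht => (hu t (Ico_subset_Icc_self ht)).hasDerivWithinAt)
    (fun t ht => .inl (mem_image_of_mem u (Ico_subset_Icc_self ht)))
    hwc (fun t ht => (hw t (Ico_subset_Icc_self ht)).hasDerivWithinAt)
    (fun t ht => .inr (mem_image_of_mem w (Ico_subset_Icc_self ht))) ha

theorem pos_of_continuousOn_Ici_of_ne_zero {g : ℝ → ℝ} {a : ℝ} (hg : ContinuousOn g (Ici a))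
    (ha : 0 < g a) (hne : ∀ x ∈ Ici a, g x ≠ 0) : ∀ x ∈ Ici a, 0 < g x := by
  intro x hx
  by_contra! hx0
  obtain ⟨z, hz, hgz⟩ := intermediate_value_Icc' (f := g) hx
    (hg.mono Icc_subset_Ici_self) ⟨hx0, ha.le⟩
  exact hne z hz.1 hgz

theorem StrictMonoOn.lt_of_tendsto_atTop {g : ℝ → ℝ} {a L : ℝ} (hg : StrictMonoOn g (Ici a))
    (hlim : Tendsto g atTop (𝓝 L)) : ∀ x ∈ Ici a, g x < L := by
  intro x hx
  have hx1 : x + 1 ∈ Ici a := by simp only [mem_Ici] at hx ⊢; linarith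
  have hle : g (x + 1) ≤ L := ge_of_tendsto hlim <| by
    filter_upwards [eventually_ge_atTop (x + 1)] with z hz
    exact hg.monotoneOn hx1 (hx1.out.trans hz) hz
  exact (hg hx hx1 (by linarith)).trans_le hle

theorem exists_deriv_eq_zero_of_deriv_neg_of_tendsto {g : ℝ → ℝ} {a L : ℝ}
    (hg : Differentiable ℝ g) (hg' : Continuous (deriv g)) (ha : deriv g a < 0) (hL : g a ≤ L)
    (hlim : Tendsto g atTop (𝓝 L)) : ∃ m > a, deriv g m = 0 := by
  by_contra! hne
  have hneg : ∀ x ∈ Ici a, 0 < -deriv g x := by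
    refine pos_of_continuousOn_Ici_of_ne_zero hg'.neg.continuousOn (neg_pos.2 ha) fun x hx => ?_
    rcases hx.out.eq_or_lt with rfl | hax
    · exact (neg_pos.2 ha).ne'
    · exact neg_ne_zero.2 (hne x hax)
  have hanti : StrictMonoOn (-g) (Ici a) := by
    refine strictMonoOn_of_deriv_pos (convex_Ici a) hg.neg.continuous.continuousOn fun x hx => ?_
    rw [interior_Ici] at hx
    simpa [deriv.neg] using hneg x (Ioi_subset_Ici_self hx)
  have := hanti.lt_of_tendsto_atTop hlim.neg a self_mem_Ici
  simp only [Pi.neg_apply, neg_lt_neg_iff] at this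
  linarith

noncomputable def phaseCurve (φ : ℝ → ℝ) (y : ℝ) : ℝ × ℝ := (φ y, deriv φ y)

/-- `φ'' + f(φ) = 0` as the first-order system `(φ, ψ)' = (ψ, -f φ)`. -/
def phaseField (f : ℝ → ℝ) (p : ℝ × ℝ) : ℝ × ℝ := (p.2, -f p.1)

theorem LocallyLipschitz.phaseField {f : ℝ → ℝ} (hf : LocallyLipschitz f) :
    LocallyLipschitz (phaseField f) :=
  LipschitzWith.prod_snd.locallyLipschitz.prodMk
    (locallyLipschitz_neg_iff.2 (hf.comp LipschitzWith.prod_fst.locallyLipschitz))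

section PhasePlane

variable {f φ : ℝ → ℝ} (hφ : Differentiable ℝ φ) (hφ' : Differentiable ℝ (deriv φ))
  (hode : ∀ y ∈ Ici (0 : ℝ), deriv (deriv φ) y = -f (φ y))
include hφ hφ' hode

theorem hasDerivAt_phaseCurve {y : ℝ} (hy : 0 ≤ y) :
    HasDerivAt (phaseCurve φ) (phaseField f (phaseCurve φ y)) y := by
  rw [show phaseField f (phaseCurve φ y) = (deriv φ y, deriv (deriv φ) y) by
    simp [phaseField, phaseCurve, hode y hy]]
  exact (hφ y).hasDerivAt.prodMk (hφ' y).hasDerivAt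

variable (hf : LocallyLipschitz f)
include hf

/-- By uniqueness: the time-reversed, velocity-flipped curve solves the same system and agrees
with the solution at the critical point `c`. -/
theorem phaseCurve_two_mul_sub {c s : ℝ} (hc : deriv φ c = 0) (hs : 0 ≤ s) (hsc : s ≤ c) :
    phaseCurve φ (2 * c - s) = (φ s, -deriv φ s) := by
  set w : ℝ → ℝ × ℝ := fun t => (φ (2 * c - t), -deriv φ (2 * c - t))
  have hw : ∀ t ∈ Icc c (2 * c - s), HasDerivAt w (phaseField f (w t)) t := by
    intro t ht
    have hr : HasDerivAt (fun t : ℝ => 2 * c - t) (-1) t := by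
      simpa using (hasDerivAt_id t).const_sub (2 * c)
    have := ((hφ _).hasDerivAt.comp t hr).prodMk ((hφ' _).hasDerivAt.comp t hr).neg
    have hode_t := hode (2 * c - t) (mem_Ici.2 (by linarith [ht.2]))
    simpa [w, phaseField, Function.comp_def, hode_t] using this
  have heq := ODE_solution_unique_of_locallyLipschitz hf.phaseField
    (fun t ht => hasDerivAt_phaseCurve hφ hφ' hode (by linarith [ht.1])) hw
    (by simp [w, phaseCurve, hc, two_mul]) ⟨by linarith, le_rfl⟩
  simpa [w] using heq

theorem phaseCurve_add_of_eq {p : ℝ} (hp : 0 ≤ p) (hper : phaseCurve φ p = phaseCurve φ 0)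
    {y : ℝ} (hy : 0 ≤ y) : phaseCurve φ (y + p) = phaseCurve φ y :=
  ODE_solution_unique_of_locallyLipschitz hf.phaseField
    (fun t ht => (hasDerivAt_phaseCurve hφ hφ' hode (by linarith [ht.1])).comp_add_const t p)
    (fun t ht => hasDerivAt_phaseCurve hφ hφ' hode ht.1) (by simpa using hper) ⟨hy, le_rfl⟩

theorem apply_nat_mul_eq_of_phaseCurve_eq {p : ℝ} (hp : 0 ≤ p)
    (hper : phaseCurve φ p = phaseCurve φ 0) (n : ℕ) : φ (n * p) = φ 0 := by
  suffices phaseCurve φ (n * p) = phaseCurve φ 0 from congrArg Prod.fst this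
  induction n with
  | zero => simp
  | succ n ih =>
    rw [Nat.cast_succ, add_one_mul,
      phaseCurve_add_of_eq hφ hφ' hode hf hp hper (by positivity), ih]

theorem deriv_ne_zero_of_tendsto {L : ℝ} (hL : 0 < L) (h0 : φ 0 = 0) (h0' : deriv φ 0 = 1)
    (hlim : Tendsto φ atTop (𝓝 L)) : ∀ c ∈ Ici (0 : ℝ), deriv φ c ≠ 0 := by
  intro c hc hc0
  have hA := phaseCurve_two_mul_sub hφ hφ' hode hf hc0 le_rfl hc
  simp only [phaseCurve, sub_zero, h0, h0', Prod.mk.injEq] at hA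
  obtain ⟨m, hm, hm0⟩ := exists_deriv_eq_zero_of_deriv_neg_of_tendsto hφ hφ'.continuous
    (by linarith [hA.2]) (by linarith [hA.1]) hlim
  have hB := phaseCurve_two_mul_sub hφ hφ' hode hf hm0 (by linarith [hc.out]) hm.le
  rw [hA.1, hA.2, neg_neg] at hB
  have hper : ∀ n : ℕ, φ (n * (2 * m - 2 * c)) = 0 := fun n => by
    rw [apply_nat_mul_eq_of_phaseCurve_eq hφ hφ' hode hf (by linarith [hc.out])
      (by rw [hB, phaseCurve, h0, h0']) n, h0]
  have hseq : Tendsto (fun n : ℕ => (n : ℝ) * (2 * m - 2 * c)) atTop atTop :=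
    tendsto_natCast_atTop_atTop.atTop_mul_const (by linarith [hc.out])
  have hL0 : L = 0 := tendsto_nhds_unique (hlim.comp hseq) <| by
    simpa only [Function.comp_def, hper] using tendsto_const_nhds
  exact hL.ne' hL0

end PhasePlane

theorem stmt_2 (f : ℝ → ℝ) (hf : LocallyLipschitz f) (L : ℝ) (hL : 0 < L)
    (φ : ℝ → ℝ) (hφ : ContDiff ℝ 2 φ)
    (hode : ∀ y ∈ Set.Ici (0:ℝ), deriv (deriv φ) y + f (φ y) = 0)
    (h0 : φ 0 = 0) (h0' : deriv φ 0 = 1)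
    (hlim : Tendsto φ atTop (nhds L)) :
    ∀ y ∈ Set.Ici (0:ℝ), 0 < deriv φ y ∧ 0 ≤ φ y ∧ φ y < L := by
  obtain ⟨hφ1, -, hφ2⟩ := contDiff_succ_iff_deriv.1 (show ContDiff ℝ (1 + 1) φ from hφ)
  have hφ2 := hφ2.differentiable one_ne_zero
  have hode' : ∀ y ∈ Ici (0 : ℝ), deriv (deriv φ) y = -f (φ y) := fun y hy => by
    linarith [hode y hy]
  have hpos : ∀ y ∈ Ici (0 : ℝ), 0 < deriv φ y :=
    pos_of_continuousOn_Ici_of_ne_zero hφ2.continuous.continuousOn (by rw [h0']; exact one_pos)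
      (deriv_ne_zero_of_tendsto hφ1 hφ2 hode' hf hL h0 h0' hlim)
  have hmono : StrictMonoOn φ (Ici 0) :=
    strictMonoOn_of_deriv_pos (convex_Ici 0) hφ1.continuous.continuousOn fun x hx =>
      hpos x (interior_subset hx)
  intro y hy
  refine ⟨hpos y hy, ?_, hmono.lt_of_tendsto_atTop hlim y hy⟩
  simpa [h0] using hmono.monotoneOn self_mem_Ici hy hy.out
end
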